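/- Assume s ≠ 0. Then ( a₁₁ − a₁₂·a₂₂⁻¹·a₂₁ )⁻¹ = ψ₂⁻¹·( 1ₙ − (ψ₁/(2ψ₁ψ₂ − |s|²))·( ξᵀ·ξ̄ − conj(s_xz)·(ξᵀ·zᵀ) − s_xz·(z̄·ξ̄) + (m·ψ₁ − ‖ξ‖²)·(z̄·zᵀ) ) ), where m = ψ₁⁻²·(|s|² − ψ₁ψ₂). -/

import Mathlib

/-!
The block `a₂₂` is a scalar multiple of `1 + z z*`, inverted by Sherman–Morrison. Substituting
this inverse, the Schur complement collapses to `ψ₂ • 1` plus a rank-two perturbation with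
column space spanned by `ξ, z̄` and row space by `ξ̄, z`; its inverse is then checked by
multiplying out rank-one products. The only analytic input is that the denominator
`2ψ₁ψ₂ - |s|²` is nonzero: writing `s = s_xz + ξz` as an inner product of `(s_xz, ξ)` with
`(1, z)`, Cauchy–Schwarz gives `|s|² ≤ ψ₁ψ₂`, so `2ψ₁ψ₂ - |s|² ≥ ψ₁ψ₂ ≥ |s|² > 0`.
-/

open Matrix

variable {ι : Type*} [Fintype ι]

theorem normSq_add_dotProduct_le (σ : ℂ) (ξ z : ι → ℂ) :
    Complex.normSq (σ + ξ ⬝ᵥ z) ≤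
      (∑ i, Complex.normSq (z i) + 1) * (∑ i, Complex.normSq (ξ i) + Complex.normSq σ) := by
  let f : Option ι → ℝ := fun o => o.elim ‖σ‖ fun i => ‖ξ i‖
  let g : Option ι → ℝ := fun o => o.elim 1 fun i => ‖z i‖
  have htri : ‖σ + ξ ⬝ᵥ z‖ ≤ ∑ o, f o * g o := calc
    ‖σ + ξ ⬝ᵥ z‖ ≤ ‖σ‖ + ∑ i, ‖ξ i * z i‖ :=
      (norm_add_le _ _).trans (by gcongr; exact norm_sum_le _ _)
    _ = ∑ o, f o * g o := by simp [f, g, Fintype.sum_option]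
  calc Complex.normSq (σ + ξ ⬝ᵥ z) = ‖σ + ξ ⬝ᵥ z‖ ^ 2 := (Complex.sq_norm _).symm
    _ ≤ (∑ o, f o * g o) ^ 2 := pow_le_pow_left₀ (norm_nonneg _) htri 2
    _ ≤ (∑ o, f o ^ 2) * ∑ o, g o ^ 2 := Finset.sum_mul_sq_le_sq_mul_sq _ _ _
    _ = _ := by simp [f, g, Fintype.sum_option, Complex.sq_norm]; ring

theorem dotProduct_star_eq_sum_normSq (v : ι → ℂ) :
    v ⬝ᵥ star v = ((∑ i, Complex.normSq (v i) : ℝ) : ℂ) := by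
  simp [dotProduct, Complex.mul_conj]

section Field

variable {K : Type*} [Field K] [DecidableEq ι]

theorem one_add_vecMulVec_mul_one_sub {u v : ι → K} (h : 1 + v ⬝ᵥ u ≠ 0) :
    (1 + vecMulVec u v) * (1 - (1 + v ⬝ᵥ u)⁻¹ • vecMulVec u v) = 1 := by
  rw [mul_sub, mul_one, mul_smul_comm, add_mul, one_mul, vecMulVec_mul_vecMulVec, vecMulVec_smul]
  match_scalars <;> field_simp
  ring

theorem inv_smul_one_add_vecMulVec {c : K} {u v : ι → K} (hc : c ≠ 0) (h : 1 + v ⬝ᵥ u ≠ 0) :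
    (c • (1 + vecMulVec u v))⁻¹ = c⁻¹ • (1 - (1 + v ⬝ᵥ u)⁻¹ • vecMulVec u v) :=
  inv_eq_right_inv <| by
    rw [smul_mul_smul_comm, mul_inv_cancel₀ hc, one_smul, one_add_vecMulVec_mul_one_sub h]

variable [StarRing K]

def schurComplementForm (ψ₁ ψ₂ s : K) (z ξ : ι → K) : Matrix ι ι K :=
  ψ₂ • 1 + vecMulVec ξ (star ξ) - (star s / ψ₁) • vecMulVec ξ z
    - (s / ψ₁) • vecMulVec (star z) (star ξ)
    + (ψ₁⁻¹ ^ 2 * (s * star s - ψ₁ * ψ₂)) • vecMulVec (star z) z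

variable {ψ₁ ψ₂ s σ : K} {z ξ : ι → K}

theorem schur_complement_eq_schurComplementForm (hψ₁0 : ψ₁ ≠ 0)
    (hψ₁ : ψ₁ = z ⬝ᵥ star z + 1) (hψ₂ : ψ₂ = ξ ⬝ᵥ star ξ + σ * star σ) (hs : s = σ + ξ ⬝ᵥ z) :
    ψ₂ • 1 - σ • vecMulVec (star z) (star ξ) - star σ • vecMulVec ξ z + ψ₁ • vecMulVec ξ (star ξ)
      - (ψ₁ • vecMulVec ξ (star z) + vecMulVec (star z) ξ - σ • vecMulVec (star z) (star z))
        * (ψ₁ • (1 + vecMulVec z (star z)))⁻¹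
        * (ψ₁ • vecMulVec z (star ξ) + vecMulVec (star ξ) z - star σ • vecMulVec z z)
    = schurComplementForm ψ₁ ψ₂ s z ξ := by
  have hz : star z ⬝ᵥ z = ψ₁ - 1 := by rw [hψ₁, dotProduct_comm, add_sub_cancel_right]
  have hzξ : star z ⬝ᵥ star ξ = star (ξ ⬝ᵥ z) := star_dotProduct_star _ _
  have h1z : 1 + star z ⬝ᵥ z = ψ₁ := by rw [hz, add_sub_cancel]
  rw [inv_smul_one_add_vecMulVec hψ₁0 (h1z ▸ hψ₁0), h1z, schurComplementForm]
  simp only [mul_sub, sub_mul, mul_add, add_mul, Matrix.mul_smul, Matrix.smul_mul, mul_one,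
    vecMulVec_mul_vecMulVec, vecMulVec_smul, smul_smul, hz, hzξ, smul_sub]
  subst hs hψ₂
  rw [star_add]
  match_scalars <;> field_simp <;> ring

theorem inv_schurComplementForm (hψ₁0 : ψ₁ ≠ 0) (hψ₂0 : ψ₂ ≠ 0)
    (hD : 2 * ψ₁ * ψ₂ - s * star s ≠ 0)
    (hψ₁ : ψ₁ = z ⬝ᵥ star z + 1) (hψ₂ : ψ₂ = ξ ⬝ᵥ star ξ + σ * star σ) (hs : s = σ + ξ ⬝ᵥ z) :
    (schurComplementForm ψ₁ ψ₂ s z ξ)⁻¹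
      = ψ₂⁻¹ • (1 - (ψ₁ / (2 * ψ₁ * ψ₂ - s * star s)) •
          (vecMulVec ξ (star ξ) - star σ • vecMulVec ξ z - σ • vecMulVec (star z) (star ξ)
            + (ψ₁⁻¹ ^ 2 * (s * star s - ψ₁ * ψ₂) * ψ₁ - ξ ⬝ᵥ star ξ) • vecMulVec (star z) z)) := by
  have hz : z ⬝ᵥ star z = ψ₁ - 1 := by rw [hψ₁, add_sub_cancel_right]
  have hξ : star ξ ⬝ᵥ ξ = ξ ⬝ᵥ star ξ := dotProduct_comm _ _
  have hzξ : z ⬝ᵥ ξ = ξ ⬝ᵥ z := dotProduct_comm _ _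
  have hξz : star ξ ⬝ᵥ star z = star (ξ ⬝ᵥ z) := by rw [star_dotProduct_star, hzξ]
  refine inv_eq_right_inv ?_
  -- an atom for the denominator, so that `field_simp` can clear it
  generalize hD_eq : 2 * ψ₁ * ψ₂ - s * star s = D at hD ⊢
  simp only [schurComplementForm, mul_sub, sub_mul, mul_add, add_mul, Matrix.mul_smul,
    Matrix.smul_mul, mul_one, Matrix.one_mul, vecMulVec_mul_vecMulVec, vecMulVec_smul, smul_smul,
    hz, hξ, hzξ, hξz, smul_sub, smul_add]
  match_scalars <;> field_simp
  all_goals subst hD_eq hs hψ₂; rw [star_add]; ring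

end Field

theorem stmt_17_general (n : ℕ) (s : ℂ) (hs : s ≠ 0) (z ξ : Fin n → ℂ) :
    let sxz : ℂ := s - ∑ i, ξ i * z i
    let ψ₁r : ℝ := (∑ i, Complex.normSq (z i)) + 1
    let ψ₂r : ℝ := (∑ i, Complex.normSq (ξ i)) + Complex.normSq sxz
    let τr : ℝ := ψ₁r * ψ₂r
    let τ₀r : ℝ := Complex.normSq s
    let ψ₁ : ℂ := (ψ₁r : ℂ)
    let ψ₂ : ℂ := (ψ₂r : ℂ)
    let τ : ℂ := (τr : ℂ)
    let τ₀ : ℂ := (τ₀r : ℂ)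
    let a11 : Matrix (Fin n) (Fin n) ℂ :=
      ψ₂ • 1 - sxz • Matrix.vecMulVec (star z) (star ξ)
        - star sxz • Matrix.vecMulVec ξ z + ψ₁ • Matrix.vecMulVec ξ (star ξ)
    let a12 : Matrix (Fin n) (Fin n) ℂ :=
      ψ₁ • Matrix.vecMulVec ξ (star z) + Matrix.vecMulVec (star z) ξ
        - sxz • Matrix.vecMulVec (star z) (star z)
    let a21 : Matrix (Fin n) (Fin n) ℂ :=
      ψ₁ • Matrix.vecMulVec z (star ξ) + Matrix.vecMulVec (star ξ) z
        - star sxz • Matrix.vecMulVec z z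
    let a22 : Matrix (Fin n) (Fin n) ℂ := ψ₁ • (1 + Matrix.vecMulVec z (star z))
    let A' : Matrix (Fin n ⊕ Fin n) (Fin n ⊕ Fin n) ℂ := Matrix.fromBlocks a11 a12 a21 a22
    let b : Fin n ⊕ Fin n → ℂ :=
      Sum.elim (fun i => ψ₂ * star (z i) - ψ₁ * star sxz * ξ i)
               (fun i => ψ₁ * (star (ξ i) - star sxz * z i))
    let m : ℂ := ψ₁⁻¹ ^ 2 * (τ₀ - ψ₁ * ψ₂)
    let ξn : ℂ := ((∑ i, Complex.normSq (ξ i) : ℝ) : ℂ)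
    (a11 - a12 * a22⁻¹ * a21)⁻¹
      = ψ₂⁻¹ • ((1 : Matrix (Fin n) (Fin n) ℂ)
          - (ψ₁ / (2 * ψ₁ * ψ₂ - τ₀)) •
              (Matrix.vecMulVec ξ (star ξ) - star sxz • Matrix.vecMulVec ξ z
                - sxz • Matrix.vecMulVec (star z) (star ξ)
                + (m * ψ₁ - ξn) • Matrix.vecMulVec (star z) z)) := by
  intro sxz ψ₁r ψ₂r _ τ₀r ψ₁ ψ₂ _ τ₀ a11 a12 a21 a22 _ _ m ξn
  have hs_eq : s = sxz + ξ ⬝ᵥ z := (sub_add_cancel s _).symm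
  have hψ₁ : ψ₁ = z ⬝ᵥ star z + 1 := by simp [ψ₁, ψ₁r, dotProduct_star_eq_sum_normSq]
  have hξn : ξn = ξ ⬝ᵥ star ξ := (dotProduct_star_eq_sum_normSq ξ).symm
  have hψ₂ : ψ₂ = ξ ⬝ᵥ star ξ + sxz * star sxz := by
    simp [ψ₂, ψ₂r, dotProduct_star_eq_sum_normSq, Complex.mul_conj]
  have hτ₀ : τ₀ = s * star s := by simp [τ₀, τ₀r, Complex.mul_conj]
  have hm : m = ψ₁⁻¹ ^ 2 * (s * star s - ψ₁ * ψ₂) := by rw [← hτ₀]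
  have hτ₀_le : τ₀r ≤ ψ₁r * ψ₂r :=
    (congrArg Complex.normSq hs_eq).trans_le (normSq_add_dotProduct_le sxz ξ z)
  have hτ₀_pos : 0 < τ₀r := Complex.normSq_pos.2 hs
  have hψ₁r : 1 ≤ ψ₁r :=
    le_add_of_nonneg_left (Finset.sum_nonneg fun i _ => Complex.normSq_nonneg _)
  have hψ₂r : 0 < ψ₂r := pos_of_mul_pos_right (hτ₀_pos.trans_le hτ₀_le) (by linarith)
  have hψ₁0 : ψ₁ ≠ 0 := Complex.ofReal_ne_zero.2 (by linarith)
  have hψ₂0 : ψ₂ ≠ 0 := Complex.ofReal_ne_zero.2 hψ₂r.ne'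
  have hD : 2 * ψ₁ * ψ₂ - s * star s ≠ 0 := by
    rw [← hτ₀, show 2 * ψ₁ * ψ₂ - τ₀ = ((2 * ψ₁r * ψ₂r - τ₀r : ℝ) : ℂ) by push_cast; rfl]
    exact Complex.ofReal_ne_zero.2 (by linarith)
  rw [hξn, hm, hτ₀, schur_complement_eq_schurComplementForm hψ₁0 hψ₁ hψ₂ hs_eq,
    inv_schurComplementForm hψ₁0 hψ₂0 hD hψ₁ hψ₂ hs_eq]

theorem stmt_17 (n : ℕ) (hn : 1 ≤ n) (s : ℂ) (hs : s ≠ 0) (z ξ : Fin n → ℂ) :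
    let sxz : ℂ := s - ∑ i, ξ i * z i
    let ψ₁r : ℝ := (∑ i, Complex.normSq (z i)) + 1
    let ψ₂r : ℝ := (∑ i, Complex.normSq (ξ i)) + Complex.normSq sxz
    let τr : ℝ := ψ₁r * ψ₂r
    let τ₀r : ℝ := Complex.normSq s
    let ψ₁ : ℂ := (ψ₁r : ℂ)
    let ψ₂ : ℂ := (ψ₂r : ℂ)
    let τ : ℂ := (τr : ℂ)
    let τ₀ : ℂ := (τ₀r : ℂ)
    let a11 : Matrix (Fin n) (Fin n) ℂ :=
      ψ₂ • 1 - sxz • Matrix.vecMulVec (star z) (star ξ)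
        - star sxz • Matrix.vecMulVec ξ z + ψ₁ • Matrix.vecMulVec ξ (star ξ)
    let a12 : Matrix (Fin n) (Fin n) ℂ :=
      ψ₁ • Matrix.vecMulVec ξ (star z) + Matrix.vecMulVec (star z) ξ
        - sxz • Matrix.vecMulVec (star z) (star z)
    let a21 : Matrix (Fin n) (Fin n) ℂ :=
      ψ₁ • Matrix.vecMulVec z (star ξ) + Matrix.vecMulVec (star ξ) z
        - star sxz • Matrix.vecMulVec z z
    let a22 : Matrix (Fin n) (Fin n) ℂ := ψ₁ • (1 + Matrix.vecMulVec z (star z))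
    let A' : Matrix (Fin n ⊕ Fin n) (Fin n ⊕ Fin n) ℂ := Matrix.fromBlocks a11 a12 a21 a22
    let b : Fin n ⊕ Fin n → ℂ :=
      Sum.elim (fun i => ψ₂ * star (z i) - ψ₁ * star sxz * ξ i)
               (fun i => ψ₁ * (star (ξ i) - star sxz * z i))
    let m : ℂ := ψ₁⁻¹ ^ 2 * (τ₀ - ψ₁ * ψ₂)
    let ξn : ℂ := ((∑ i, Complex.normSq (ξ i) : ℝ) : ℂ)
    (a11 - a12 * a22⁻¹ * a21)⁻¹
      = ψ₂⁻¹ • ((1 : Matrix (Fin n) (Fin n) ℂ)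
          - (ψ₁ / (2 * ψ₁ * ψ₂ - τ₀)) •
              (Matrix.vecMulVec ξ (star ξ) - star sxz • Matrix.vecMulVec ξ z
                - sxz • Matrix.vecMulVec (star z) (star ξ)
                + (m * ψ₁ - ξn) • Matrix.vecMulVec (star z) z)) :=
  stmt_17_general n s hs z ξ
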